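/- LESS gadget soundness (case x > y): In the same gadget (course c_x̄ with p*_{x̄} ∈ [1 − p*_x, 1 − p*_x + β], course c_z with capacity n_x/8 priced positively, n_x/4 students with preference list ({c_x̄,c_y},{c_z}), at most n_x/16 other students interested in c_z), if p*_x > p*_y + β then in any (α,β)-CEEI with n_x ≥ 2^8·α we must have p*_z = 0. -/

import Mathlib

open Finset

/-- An economy: course capacities and, for each student, an ordered list
(most preferred first) of permissible course bundles. -/
structure Econ (N M : ℕ) where
  q : Fin M → ℕ
  pref : Fin N → List (Finset (Fin M))

/-- Total price of a bundle. -/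
def cost {M : ℕ} (p : Fin M → ℝ) (S : Finset (Fin M)) : ℝ := ∑ j ∈ S, p j

/-- `Chooses p bdg l S`: `S` is the most preferred affordable bundle in the
ordered list `l` (most preferred first) at prices `p` with budget `bdg`
(`S = ∅` if no listed bundle is affordable). -/
def Chooses {M : ℕ} (p : Fin M → ℝ) (bdg : ℝ) (l : List (Finset (Fin M)))
    (S : Finset (Fin M)) : Prop :=
  (S = ∅ ∧ ∀ T ∈ l, ¬ cost p T ≤ bdg) ∨
  (S ∈ l ∧ cost p S ≤ bdg ∧ ∀ T ∈ l.take (l.idxOf S), ¬ cost p T ≤ bdg)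

/-- Number of students enrolled in course `j`. -/
def enroll {N M : ℕ} (x : Fin N → Finset (Fin M)) (j : Fin M) : ℕ :=
  (univ.filter fun i => j ∈ x i).card

/-- Clearing error of course `j`: oversubscription always counts; for a
positively priced course undersubscription counts as well. -/
noncomputable def zerr {N M : ℕ} (E : Econ N M) (p : Fin M → ℝ) (x : Fin N → Finset (Fin M))
    (j : Fin M) : ℝ :=
  if 0 < p j then (enroll x j : ℝ) - E.q j
  else max ((enroll x j : ℝ) - E.q j) 0

/-- L2 norm of the clearing-error vector. -/
noncomputable def clearErr {N M : ℕ} (E : Econ N M) (p : Fin M → ℝ)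
    (x : Fin N → Finset (Fin M)) : ℝ :=
  Real.sqrt (∑ j, (zerr E p x j) ^ 2)

/-- An `(α,β)`-CEEI: nonnegative prices, budgets in `[1,1+β]`, every student
is allocated her most preferred affordable bundle, and the total clearing
error is at most `α`. -/
structure IsCEEI {N M : ℕ} (E : Econ N M) (α β : ℝ) (p : Fin M → ℝ)
    (b : Fin N → ℝ) (x : Fin N → Finset (Fin M)) : Prop where
  price_nonneg : ∀ j, 0 ≤ p j
  budget : ∀ i, 1 ≤ b i ∧ b i ≤ 1 + β
  alloc : ∀ i, Chooses p (b i) (E.pref i) (x i)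
  clearing : clearErr E p x ≤ α

/-- Student `i` is interested in course `j` (lists some bundle containing it). -/
def Interested {N M : ℕ} (E : Econ N M) (j : Fin M) (i : Fin N) : Prop :=
  ∃ S ∈ E.pref i, j ∈ S

section Less

variable {N M : ℕ}

/-- The LESS gadget: a course `cxbar` whose price lies in
`[1 − p cx, 1 − p cx + β]`, an output course `cz` of capacity `nx/8`, and
`nx/4` students with ordered preference list `({cxbar, cy}, {cz})`; at most
`nx/16` other students are interested in `cz`; `nx ≥ 2^8·α`. -/
def LessGadget (E : Econ N M) (α β : ℝ) (cx cy cxbar cz : Fin M) (nx : ℕ)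
    (A : Finset (Fin N)) (p : Fin M → ℝ) : Prop :=
  cxbar ≠ cy ∧ cz ≠ cxbar ∧ cz ≠ cy ∧ cz ≠ cx ∧
  (0 < α) ∧ ((nx : ℝ) ≥ 2 ^ 8 * α) ∧
  (1 - p cx ≤ p cxbar ∧ p cxbar ≤ 1 - p cx + β) ∧
  ((A.card : ℝ) = nx / 4) ∧
  (∀ i ∈ A, E.pref i = [({cxbar, cy} : Finset (Fin M)), ({cz} : Finset (Fin M))]) ∧
  ((E.q cz : ℝ) = nx / 8) ∧
  ((({i | i ∉ A ∧ Interested E cz i} : Set (Fin N)).ncard : ℝ) ≤ nx / 16)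

end Less

/-! Budgets are at least `1` while `p cxbar + p cy ≤ 1 - p cx + β + p cy < 1`, so every gadget
student takes `{cxbar, cy}`. Only the `nx/16` outside students can then sit in `cz`, and a
positively priced `cz` would be undersubscribed by `nx/16 ≥ 16α > α`. -/

theorem cost_pair {M : ℕ} (p : Fin M → ℝ) {a b : Fin M} (hab : a ≠ b) :
    cost p {a, b} = p a + p b :=
  Finset.sum_pair hab

namespace Chooses

variable {M : ℕ} {p : Fin M → ℝ} {bdg : ℝ} {l : List (Finset (Fin M))}
  {S T : Finset (Fin M)}

theorem eq_empty_or_mem (h : Chooses p bdg l S) : S = ∅ ∨ S ∈ l :=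
  h.imp And.left And.left

theorem eq_head_of_cost_le (h : Chooses p bdg (S :: l) T) (hS : cost p S ≤ bdg) :
    T = S := by
  rcases h with ⟨_, hnone⟩ | ⟨hT, -, hbefore⟩
  · exact absurd hS (hnone S List.mem_cons_self)
  · by_contra hTS
    rw [List.idxOf_cons_ne l (Ne.symm hTS)] at hbefore
    exact hbefore S (by simp) hS

end Chooses

theorem enroll_le_ncard_interested {N M : ℕ} {E : Econ N M} {p : Fin M → ℝ}
    {b : Fin N → ℝ} {x : Fin N → Finset (Fin M)}
    (halloc : ∀ i, Chooses p (b i) (E.pref i) (x i)) {j : Fin M} {A : Finset (Fin N)}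
    (hA : ∀ i ∈ A, j ∉ x i) :
    enroll x j ≤ ({i | i ∉ A ∧ Interested E j i} : Set (Fin N)).ncard := by
  rw [enroll, ← Set.ncard_coe_finset]
  refine Set.ncard_le_ncard (fun i hi => ?_) (Set.toFinite _)
  have hji : j ∈ x i := by simpa using hi
  refine ⟨fun hiA => hA i hiA hji, ?_⟩
  rcases (halloc i).eq_empty_or_mem with hempty | hmem
  · simp [hempty] at hji
  · exact ⟨x i, hmem, hji⟩

theorem abs_zerr_le_clearErr {N M : ℕ} (E : Econ N M) (p : Fin M → ℝ)
    (x : Fin N → Finset (Fin M)) (j : Fin M) : |zerr E p x j| ≤ clearErr E p x := by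
  rw [clearErr, ← Real.sqrt_sq_eq_abs]
  exact Real.sqrt_le_sqrt <|
    Finset.single_le_sum (f := fun k => zerr E p x k ^ 2) (fun _ _ => sq_nonneg _) (mem_univ j)

theorem LessGadget.choose_pair_of_gt {N M : ℕ} {E : Econ N M} {α β : ℝ}
    {cx cy cxbar cz : Fin M} {nx : ℕ} {A : Finset (Fin N)} {p : Fin M → ℝ} {b : Fin N → ℝ}
    {x : Fin N → Finset (Fin M)} (hG : LessGadget E α β cx cy cxbar cz nx A p)
    (hC : IsCEEI E α β p b x) (hgt : p cx > p cy + β) :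
    ∀ i ∈ A, x i = {cxbar, cy} := by
  obtain ⟨hxy, -, -, -, -, -, ⟨-, hxbar⟩, -, hpref, -⟩ := hG
  intro i hi
  have hchoose := hC.alloc i
  rw [hpref i hi] at hchoose
  refine hchoose.eq_head_of_cost_le ?_
  rw [cost_pair p hxy]
  linarith [(hC.budget i).1]

/-- **LESS gadget soundness, case `p cx > p cy`.** If `p cx > p cy + β`, then
every one of the `nx/4` gadget students affords and takes `{cxbar, cy}`,
leaving `cz` (capacity `nx/8`, with at most `nx/16` other interested
students) undersubscribed by more than `α` whenever it is positively priced.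
Hence in any `(α,β)`-CEEI we must have `p cz = 0`. -/
theorem less_gadget_zero {N M : ℕ} (E : Econ N M) (α β : ℝ)
    (cx cy cxbar cz : Fin M) (nx : ℕ) (A : Finset (Fin N))
    (p : Fin M → ℝ) (b : Fin N → ℝ) (x : Fin N → Finset (Fin M))
    (hG : LessGadget E α β cx cy cxbar cz nx A p)
    (hC : IsCEEI E α β p b x)
    (hgt : p cx > p cy + β) :
    p cz = 0 := by
  have hpair := hG.choose_pair_of_gt hC hgt
  obtain ⟨-, hzxbar, hzy, -, hα, hnx, -, -, -, hq, hother⟩ := hG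
  by_contra hz
  have hpos : 0 < p cz := (hC.price_nonneg cz).lt_of_ne' hz
  have henroll : (enroll x cz : ℝ) ≤ nx / 16 := by
    refine le_trans ?_ hother
    exact_mod_cast enroll_le_ncard_interested hC.alloc fun i hi => by
      simp [hpair i hi, hzxbar, hzy]
  have hunder : (nx : ℝ) / 16 ≤ -zerr E p x cz := by
    rw [zerr, if_pos hpos, hq]
    linarith
  have hbound : -zerr E p x cz ≤ α :=
    (neg_le_abs _).trans ((abs_zerr_le_clearErr E p x cz).trans hC.clearing)
  linarith
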